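/- arXiv:2208.12411 — 2 statements merged into one kernel-verified Lean document; each statement's English description precedes it below -/
import Mathlib

section
/- Main dissipation inequality for energy fluctuations (the key inequality (B.3) in static form): if λ ≥ 0 is a spectral-gap lower bound for (k, M), then ∑_{α,β∈I} k_{αβ} ∬ ( (1/2)|u_α(x) − u_β(y)|² + e_α(x) + e_β(y) ) dμ_α(x) dμ_β(y) ≥ (ζλ/M) ∑_{α,β∈I} ∬ ( (1/2)|u_α(x) − u_β(y)|² + e_α(x) + e_β(y) ) dμ_α(x) dμ_β(y), i.e. the weighted dissipation dominates 2ζλ times the energy fluctuation δE := (1/(2M)) ∑_{α,β} ∬ ( (1/2)|u_α(x) − u_β(y)|² + e_α(x) + e_β(y) ) dμ_α dμ_β. -/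
/-!
Write `w_α = ⨍ u_α dμ_α` for the mean velocity of species `α` and `g_α` for its internal energy
(thermal part `½∫|u_α - w_α|²` plus `∫e_α`). By the parallel axis theorem each pair integral splits
as `½ M_α M_β |w_α - w_β|² + M_β g_α + M_α g_β`. The spectral gap, applied coordinatewise to the
means, controls the first term; applied to the indicator of a single species `γ`, it bounds the
weighted degree `∑_β k_{γβ} M_β` from below by `λ (M - M_γ) / M ≥ ζλ`, which controls the
internal energies.
-/

open MeasureTheory Finset

open scoped RealInnerProductSpace

section Energy

variable {X Y E : Type*} [MeasurableSpace X] [MeasurableSpace Y] [NormedAddCommGroup E]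

theorem MeasureTheory.MemLp.integrable_norm_sub_const_sq {μ : Measure X} [IsFiniteMeasure μ]
    {u : X → E} (hu : MemLp u 2 μ) (c : E) : Integrable (fun x => ‖u x - c‖ ^ 2) μ :=
  (hu.sub (memLp_const c)).integrable_norm_pow two_ne_zero

variable [InnerProductSpace ℝ E]

noncomputable def internalEnergy (μ : Measure X) (u : X → E) (e : X → ℝ) : ℝ :=
  (1 / 2) * ∫ x, ‖u x - ⨍ y, u y ∂μ‖ ^ 2 ∂μ + ∫ x, e x ∂μ

theorem internalEnergy_nonneg (μ : Measure X) (u : X → E) {e : X → ℝ} (he : ∀ x, 0 ≤ e x) :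
    0 ≤ internalEnergy μ u e :=
  add_nonneg (mul_nonneg (by norm_num) (integral_nonneg fun _ => sq_nonneg _))
    (integral_nonneg he)

variable [CompleteSpace E]

theorem integral_norm_sub_sq_eq {μ : Measure X} [IsFiniteMeasure μ] {u : X → E}
    (hu : MemLp u 2 μ) (c : E) :
    ∫ x, ‖u x - c‖ ^ 2 ∂μ
      = ∫ x, ‖u x - ⨍ y, u y ∂μ‖ ^ 2 ∂μ + μ.real Set.univ * ‖⨍ y, u y ∂μ - c‖ ^ 2 := by
  set w := ⨍ y, u y ∂μ
  have hsplit : ∀ x, ‖u x - c‖ ^ 2 = ‖u x - w‖ ^ 2 + 2 * ⟪w - c, u x - w⟫ + ‖w - c‖ ^ 2 := by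
    intro x
    rw [← sub_add_sub_cancel (u x) w c, norm_add_sq_real, real_inner_comm]
  have hcentered : Integrable (fun x => u x - w) μ :=
    (hu.integrable one_le_two).sub (integrable_const w)
  have hcross : Integrable (fun x => 2 * ⟪w - c, u x - w⟫) μ :=
    (hcentered.const_inner (w - c)).const_mul 2
  simp_rw [hsplit]
  rw [integral_add ((hu.integrable_norm_sub_const_sq w).fun_add hcross) (integrable_const _),
    integral_add (hu.integrable_norm_sub_const_sq w) hcross, integral_const_mul,
    integral_inner hcentered, integral_sub_average, inner_zero_right, integral_const, smul_eq_mul]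
  ring

theorem integral_integral_half_norm_sub_sq_add {μ : Measure X} {ν : Measure Y}
    [IsFiniteMeasure μ] [IsFiniteMeasure ν] {u : X → E} {v : Y → E} {e : X → ℝ} {f : Y → ℝ}
    (hu : MemLp u 2 μ) (hv : MemLp v 2 ν) (he : Integrable e μ) (hf : Integrable f ν) :
    ∫ x, ∫ y, ((1 / 2) * ‖u x - v y‖ ^ 2 + e x + f y) ∂ν ∂μ
      = (1 / 2) * (μ.real Set.univ * ν.real Set.univ) * ‖⨍ x, u x ∂μ - ⨍ y, v y ∂ν‖ ^ 2
        + ν.real Set.univ * internalEnergy μ u e + μ.real Set.univ * internalEnergy ν v f := by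
  have hinner : ∀ x, ∫ y, ((1 / 2) * ‖u x - v y‖ ^ 2 + e x + f y) ∂ν
      = (1 / 2) * ν.real Set.univ * ‖u x - ⨍ y, v y ∂ν‖ ^ 2 + ν.real Set.univ * e x
        + internalEnergy ν v f := by
    intro x
    simp_rw [norm_sub_rev (u x)]
    have hsq := (hv.integrable_norm_sub_const_sq (u x)).const_mul (1 / 2)
    rw [integral_add (hsq.fun_add (integrable_const _)) hf, integral_add hsq (integrable_const _),
      integral_const_mul, integral_norm_sub_sq_eq hv, integral_const, smul_eq_mul, internalEnergy]
    ring
  simp_rw [hinner]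
  have hsq := (hu.integrable_norm_sub_const_sq (⨍ y, v y ∂ν)).const_mul ((1 / 2) * ν.real Set.univ)
  rw [integral_add (hsq.fun_add (he.const_mul _)) (integrable_const _),
    integral_add hsq (he.const_mul _), integral_const_mul, integral_const_mul,
    integral_norm_sub_sq_eq hu,
    integral_const, smul_eq_mul]
  unfold internalEnergy
  ring

end Energy

section SpectralGap

variable {I : Type*} [Fintype I]

def dirichletForm {E : Type*} [NormedAddCommGroup E] (c : I → I → ℝ) (M : I → ℝ) (w : I → E) :
    ℝ :=
  ∑ α, ∑ β, c α β * ‖w α - w β‖ ^ 2 * M α * M β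

theorem dirichletForm_nonneg {E : Type*} [NormedAddCommGroup E] {c : I → I → ℝ} {M : I → ℝ}
    (hc : ∀ α β, 0 ≤ c α β) (hM : ∀ α, 0 ≤ M α) (w : I → E) : 0 ≤ dirichletForm c M w :=
  sum_nonneg fun α _ => sum_nonneg fun β _ =>
    mul_nonneg (mul_nonneg (mul_nonneg (hc α β) (sq_nonneg _)) (hM α)) (hM β)

theorem dirichletForm_euclidean {ι : Type*} [Fintype ι] (c : I → I → ℝ) (M : I → ℝ)
    (w : I → EuclideanSpace ℝ ι) :
    dirichletForm c M w = ∑ i : ι, dirichletForm c M (fun α => w α i) := by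
  simp only [dirichletForm, EuclideanSpace.real_norm_sq_eq, Real.norm_eq_abs, sq_abs,
    PiLp.sub_apply, mul_sum, sum_mul]
  exact (sum_congr rfl fun α _ => sum_comm).trans sum_comm

theorem dirichletForm_eq_sum_filter_ne [DecidableEq I] {E : Type*} [NormedAddCommGroup E]
    (c : I → I → ℝ) (M : I → ℝ) (w : I → E) :
    dirichletForm c M w = ∑ α, ∑ β ∈ univ.filter (· ≠ α), c α β * ‖w α - w β‖ ^ 2 * M α * M β := by
  refine sum_congr rfl fun α _ => ?_
  rw [filter_ne', sum_erase _ (by simp)]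

theorem dirichletForm_single [DecidableEq I] {c : I → I → ℝ} (hc : ∀ α β, c α β = c β α)
    (M : I → ℝ) (γ : I) :
    dirichletForm c M (Pi.single γ (1 : ℝ)) = 2 * M γ * (∑ β, c γ β * M β - c γ γ * M γ) := by
  have hsq : ∀ α β, ‖(Pi.single γ (1 : ℝ) : I → ℝ) α - (Pi.single γ (1 : ℝ) : I → ℝ) β‖ ^ 2
      = (if α = γ then 1 else 0) + (if β = γ then 1 else 0)
        - 2 * ((if α = γ then 1 else 0) * (if β = γ then 1 else 0)) := by
    intro α β
    simp only [Real.norm_eq_abs, sq_abs, Pi.single_apply]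
    split_ifs <;> norm_num
  simp only [dirichletForm, hsq, mul_sub, mul_add, sub_mul, add_mul, sum_add_distrib,
    sum_sub_distrib, ite_mul, mul_ite, zero_mul, mul_zero, mul_one, ← ite_sum_zero, sum_ite_eq',
    mem_univ, if_true]
  simp only [hc _ γ, ← sum_add_distrib, mul_sum]
  congr 1
  · exact sum_congr rfl fun β _ => by ring
  · ring

/-- The paper's (2.4) sums over `α ≠ β` only; the diagonal terms vanish, so full sums are used. -/
def IsSpectralGapBound (k : I → I → ℝ) (M : I → ℝ) (lam : ℝ) : Prop :=
  ∀ y : I → ℝ, lam * dirichletForm (fun _ _ => 1) M y ≤ (∑ α, M α) * dirichletForm k M y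

noncomputable def pairEnergy {E : Type*} [NormedAddCommGroup E] (M : I → ℝ) (w : I → E) (g : I → ℝ)
    (α β : I) : ℝ :=
  (1 / 2) * (M α * M β) * ‖w α - w β‖ ^ 2 + M β * g α + M α * g β

theorem sum_sum_mul_pairEnergy {E : Type*} [NormedAddCommGroup E] {c : I → I → ℝ}
    (hc : ∀ α β, c α β = c β α) (M : I → ℝ) (w : I → E) (g : I → ℝ) :
    ∑ α, ∑ β, c α β * pairEnergy M w g α β
      = (1 / 2) * dirichletForm c M w + 2 * ∑ α, (∑ β, c α β * M β) * g α := by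
  have hswap : ∑ α, ∑ β, c α β * (M α * g β) = ∑ α, ∑ β, c α β * (M β * g α) := by
    rw [sum_comm]
    exact sum_congr rfl fun α _ => sum_congr rfl fun β _ => by rw [hc]
  have hcross : ∑ α, ∑ β, c α β * (M β * g α) = ∑ α, (∑ β, c α β * M β) * g α :=
    sum_congr rfl fun α _ => by rw [sum_mul]; exact sum_congr rfl fun β _ => by ring
  calc _ = (1 / 2) * dirichletForm c M w + ∑ α, ∑ β, c α β * (M β * g α)
        + ∑ α, ∑ β, c α β * (M α * g β) := by
          simp only [pairEnergy, dirichletForm, mul_sum, ← sum_add_distrib]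
          exact sum_congr rfl fun α _ => sum_congr rfl fun β _ => by ring
    _ = _ := by rw [hswap, hcross]; ring

namespace IsSpectralGapBound

variable {k : I → I → ℝ} {M : I → ℝ} {lam : ℝ}

theorem mul_dirichletForm_le (h : IsSpectralGapBound k M lam) {ι : Type*} [Fintype ι]
    (w : I → EuclideanSpace ℝ ι) :
    lam * dirichletForm (fun _ _ => 1) M w ≤ (∑ α, M α) * dirichletForm k M w := by
  rw [dirichletForm_euclidean, dirichletForm_euclidean, mul_sum, mul_sum]
  exact sum_le_sum fun i _ => h _

theorem le_degree [DecidableEq I] (h : IsSpectralGapBound k M lam) (hk_nonneg : ∀ α β, 0 ≤ k α β)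
    (hk_symm : ∀ α β, k α β = k β α) (hM : ∀ α, 0 < M α) (γ : I) :
    lam * (∑ α, M α - M γ) ≤ (∑ α, M α) * ∑ β, k γ β * M β := by
  have hγ := h (Pi.single γ 1)
  rw [dirichletForm_single (fun _ _ => rfl), dirichletForm_single hk_symm] at hγ
  simp only [one_mul] at hγ
  have hdiag : 0 ≤ k γ γ * M γ := mul_nonneg (hk_nonneg γ γ) (hM γ).le
  have htotal : 0 ≤ ∑ α, M α := sum_nonneg fun α _ => (hM α).le
  have h2M : 0 < 2 * M γ := by linarith [hM γ]
  refine le_of_mul_le_mul_left ?_ h2M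
  nlinarith [mul_nonneg htotal (mul_nonneg h2M.le hdiag)]

theorem mul_le_degree [Nonempty I] [DecidableEq I] (h : IsSpectralGapBound k M lam) (hlam : 0 ≤ lam)
    (hk_nonneg : ∀ α β, 0 ≤ k α β) (hk_symm : ∀ α β, k α β = k β α) (hM : ∀ α, 0 < M α)
    (γ : I) : lam * (1 - univ.sup' univ_nonempty M / ∑ α, M α) ≤ ∑ β, k γ β * M β := by
  have htotal : 0 < ∑ α, M α := sum_pos (fun α _ => hM α) univ_nonempty
  have hmax : M γ ≤ univ.sup' univ_nonempty M := le_sup' M (mem_univ γ)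
  refine le_of_mul_le_mul_left ?_ htotal
  calc (∑ α, M α) * (lam * (1 - univ.sup' univ_nonempty M / ∑ α, M α))
      = lam * (∑ α, M α - univ.sup' univ_nonempty M) := by field_simp
    _ ≤ lam * (∑ α, M α - M γ) := by gcongr
    _ ≤ _ := h.le_degree hk_nonneg hk_symm hM γ

theorem mul_sum_sum_pairEnergy_le [Nonempty I] (h : IsSpectralGapBound k M lam)
    (hk_symm : ∀ α β, k α β = k β α) (hM : ∀ α, 0 < M α) (hlam : 0 ≤ lam) {ζ : ℝ} (hζ : ζ ≤ 1)
    (hdeg : ∀ γ, lam * ζ ≤ ∑ β, k γ β * M β) {ι : Type*} [Fintype ι]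
    (w : I → EuclideanSpace ℝ ι) {g : I → ℝ} (hg : ∀ α, 0 ≤ g α) :
    (ζ * lam / ∑ α, M α) * ∑ α, ∑ β, pairEnergy M w g α β
      ≤ ∑ α, ∑ β, k α β * pairEnergy M w g α β := by
  have hmass := sum_sum_mul_pairEnergy (c := fun _ _ => 1) (fun _ _ => rfl) M w g
  simp only [one_mul] at hmass
  rw [hmass, sum_sum_mul_pairEnergy hk_symm]
  have htotal : 0 < ∑ α, M α := sum_pos (fun α _ => hM α) univ_nonempty
  have hquad : ζ * lam / (∑ α, M α) * dirichletForm (fun _ _ => 1) M w ≤ dirichletForm k M w := by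
    have hD := dirichletForm_nonneg (fun _ _ => zero_le_one) (fun α => (hM α).le) w
    rw [div_mul_eq_mul_div, div_le_iff₀ htotal]
    nlinarith [h.mul_dirichletForm_le w, mul_nonneg hlam hD]
  have hinternal : ζ * lam / (∑ α, M α) * ∑ α, (∑ β, M β) * g α
      ≤ ∑ α, (∑ β, k α β * M β) * g α := by
    rw [mul_sum]
    refine sum_le_sum fun α _ => ?_
    calc ζ * lam / (∑ α, M α) * ((∑ β, M β) * g α) = lam * ζ * g α := by
          field_simp
      _ ≤ _ := mul_le_mul_of_nonneg_right (hdeg α) (hg α)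
  linear_combination (1 / 2) * hquad + 2 * hinternal

end IsSpectralGapBound

end SpectralGap

theorem stmt_7_general {I : Type*} [Fintype I] [DecidableEq I] [Nonempty I]
    (M : I → ℝ) (hM : ∀ α, 0 < M α)
    (k : I → I → ℝ) (hk_nonneg : ∀ α β, 0 ≤ k α β) (hk_symm : ∀ α β, k α β = k β α)
    (lam : ℝ) (hlam : 0 ≤ lam)
    (hgap : ∀ y : I → ℝ,
      lam * ∑ α, ∑ β ∈ univ.filter (fun β => β ≠ α), (y α - y β) ^ 2 * M α * M β
        ≤ (∑ α, M α) *
            ∑ α, ∑ β ∈ univ.filter (fun β => β ≠ α), k α β * (y α - y β) ^ 2 * M α * M β)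
    (ζ : ℝ) (hζ : ζ = 1 - (univ.sup' univ_nonempty M) / (∑ α, M α))
    {d : ℕ}
    (μ : I → Measure (EuclideanSpace ℝ (Fin d)))
    [∀ α, IsFiniteMeasure (μ α)]
    (hμ : ∀ α, ((μ α) Set.univ).toReal = M α)
    (u : I → EuclideanSpace ℝ (Fin d) → EuclideanSpace ℝ (Fin d))
    (hu_meas : ∀ α, Measurable (u α))
    (hu_int : ∀ α, Integrable (fun x => ‖u α x‖ ^ 2) (μ α))
    (e : I → EuclideanSpace ℝ (Fin d) → ℝ)
    (he_nonneg : ∀ α x, 0 ≤ e α x)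
    (he_int : ∀ α, Integrable (e α) (μ α)) :
    (ζ * lam / (∑ α, M α)) *
        ∑ α, ∑ β, ∫ x, ∫ y,
          ((1 / 2) * ‖u α x - u β y‖ ^ 2 + e α x + e β y) ∂(μ β) ∂(μ α)
      ≤ ∑ α, ∑ β, k α β * ∫ x, ∫ y,
          ((1 / 2) * ‖u α x - u β y‖ ^ 2 + e α x + e β y) ∂(μ β) ∂(μ α) := by
  have hbound : IsSpectralGapBound k M lam := fun y => by
    simpa only [dirichletForm_eq_sum_filter_ne, Real.norm_eq_abs, sq_abs, one_mul] using hgap y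
  have hL2 : ∀ α, MemLp (u α) 2 (μ α) := fun α =>
    (memLp_two_iff_integrable_sq_norm (hu_meas α).aestronglyMeasurable).2 (hu_int α)
  have hpair : ∀ α β, ∫ x, ∫ y, ((1 / 2) * ‖u α x - u β y‖ ^ 2 + e α x + e β y) ∂(μ β) ∂(μ α)
      = pairEnergy M (fun α => ⨍ x, u α x ∂(μ α)) (fun α => internalEnergy (μ α) (u α) (e α))
          α β := by
    intro α β
    rw [integral_integral_half_norm_sub_sq_add (hL2 α) (hL2 β) (he_int α) (he_int β)]
    simp only [pairEnergy, measureReal_def, hμ]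
  simp only [hpair]
  have hζ_le_one : ζ ≤ 1 := by
    rw [hζ, sub_le_self_iff]
    exact div_nonneg ((hM _).le.trans (le_sup' M (mem_univ (Classical.arbitrary I))))
      (sum_nonneg fun α _ => (hM α).le)
  exact hbound.mul_sum_sum_pairEnergy_le hk_symm hM hlam hζ_le_one
    (fun γ => hζ ▸ hbound.mul_le_degree hlam hk_nonneg hk_symm hM γ) _
    (fun α => internalEnergy_nonneg _ _ (he_nonneg α))

/-- Main dissipation inequality for energy fluctuations (the key inequality (B.3)
in static form): the weighted dissipation dominates `2ζλ` times the energy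
fluctuation `δE`. -/
theorem stmt_7 {I : Type*} [Fintype I] [DecidableEq I] [Nonempty I]
    (hcard : 1 < Fintype.card I)
    (M : I → ℝ) (hM : ∀ α, 0 < M α)
    (k : I → I → ℝ) (hk_nonneg : ∀ α β, 0 ≤ k α β) (hk_symm : ∀ α β, k α β = k β α)
    (lam : ℝ) (hlam : 0 ≤ lam)
    (hgap : ∀ y : I → ℝ,
      lam * ∑ α, ∑ β ∈ univ.filter (fun β => β ≠ α), (y α - y β) ^ 2 * M α * M β
        ≤ (∑ α, M α) *
            ∑ α, ∑ β ∈ univ.filter (fun β => β ≠ α), k α β * (y α - y β) ^ 2 * M α * M β)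
    (ζ : ℝ) (hζ : ζ = 1 - (univ.sup' univ_nonempty M) / (∑ α, M α))
    {d : ℕ} (hd : 1 ≤ d)
    (μ : I → Measure (EuclideanSpace ℝ (Fin d)))
    [∀ α, IsFiniteMeasure (μ α)]
    (hμ : ∀ α, ((μ α) Set.univ).toReal = M α)
    (u : I → EuclideanSpace ℝ (Fin d) → EuclideanSpace ℝ (Fin d))
    (hu_meas : ∀ α, Measurable (u α))
    (hu_int : ∀ α, Integrable (fun x => ‖u α x‖ ^ 2) (μ α))
    (e : I → EuclideanSpace ℝ (Fin d) → ℝ)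
    (he_meas : ∀ α, Measurable (e α))
    (he_nonneg : ∀ α x, 0 ≤ e α x)
    (he_int : ∀ α, Integrable (e α) (μ α)) :
    (ζ * lam / (∑ α, M α)) *
        ∑ α, ∑ β, ∫ x, ∫ y,
          ((1 / 2) * ‖u α x - u β y‖ ^ 2 + e α x + e β y) ∂(μ β) ∂(μ α)
      ≤ ∑ α, ∑ β, k α β * ∫ x, ∫ y,
          ((1 / 2) * ‖u α x - u β y‖ ^ 2 + e α x + e β y) ∂(μ β) ∂(μ α) :=
  stmt_7_general M hM k hk_nonneg hk_symm lam hlam hgap ζ hζ μ hμ u hu_meas hu_int e he_nonneg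
    he_int
end

section
/- Improved dispersion via exponentially weighted enstrophy (second step of Appendix C): let σ ∈ (0,1], q > 1, c > 0, μ ∈ (0,1], C > 0, B > 0. Suppose D : [0,∞) → (0,∞) is differentiable and g : [0,∞) → [0,∞) is continuous with D′(t) ≤ C g(t) D(t)^{1−σ} for all t ≥ 0 and ∫₀ᵗ e^{c τ^{μ}} g(τ)^{q} dτ ≤ B (1 + t^{μ}) for all t ≥ 0. Then there exists a constant C′ > 0 such that D(t) ≤ C′ (1+t)^{μ/(qσ)} for all t ≥ 0. -/
/-!
Since `(D ^ σ)' = σ D ^ (σ - 1) D' ≤ σ C g`, we get `D(t) ^ σ ≤ D(0) ^ σ + σ C ∫₀ᵗ g`.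
Hölder's inequality with the weight `exp (c τ ^ μ)` bounds `∫₀ᵗ g` by `(B (1 + t ^ μ)) ^ (1 / q)`
times a power of `∫₀^∞ exp (-(q' / q) c τ ^ μ) dτ`, a finite Gamma integral. Hence `D ^ σ` grows at
most like `(1 + t) ^ (μ / q)`.
-/

open Real Set MeasureTheory intervalIntegral

theorem rpow_le_rpow_add_integral_of_deriv_le {D f : ℝ → ℝ} {σ t : ℝ} (hσ : 0 ≤ σ)
    (hD_pos : ∀ x, 0 < D x) (hD_diff : Differentiable ℝ D) (hf : Continuous f)
    (hD' : ∀ x ≥ (0:ℝ), deriv D x ≤ f x * D x ^ (1 - σ)) (ht : 0 ≤ t) :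
    D t ^ σ ≤ D 0 ^ σ + σ * ∫ τ in (0:ℝ)..t, f τ := by
  have hderiv : ∀ x, HasDerivAt (fun y => D y ^ σ) (σ * D x ^ (σ - 1) * deriv D x) x := fun x =>
    (hasDerivAt_rpow_const (Or.inl (hD_pos x).ne')).comp x (hD_diff x).hasDerivAt
  have hslope : ∀ x ∈ Ioo 0 t, σ * D x ^ (σ - 1) * deriv D x ≤ σ * f x := fun x hx => calc
    σ * D x ^ (σ - 1) * deriv D x ≤ σ * D x ^ (σ - 1) * (f x * D x ^ (1 - σ)) :=
      mul_le_mul_of_nonneg_left (hD' x hx.1.le)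
        (mul_nonneg hσ (rpow_nonneg (hD_pos x).le _))
    _ = σ * f x * (D x ^ (σ - 1) * D x ^ (1 - σ)) := by ring
    _ = σ * f x := by rw [← rpow_add (hD_pos x), sub_add_sub_cancel', sub_self, rpow_zero, mul_one]
  have := sub_le_integral_of_hasDeriv_right_of_le ht
    (fun x _ => (hderiv x).continuousAt.continuousWithinAt)
    (fun x _ => (hderiv x).hasDerivWithinAt)
    ((show Continuous fun x => σ * f x by fun_prop).integrableOn_Icc) hslope
  rw [intervalIntegral.integral_const_mul] at this
  linarith

theorem Continuous.memLp_restrict_Ioc {f : ℝ → ℝ} (hf : Continuous f) (a b : ℝ)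
    (p : ENNReal) : MemLp f p (volume.restrict (Ioc a b)) := by
  obtain ⟨C, hC⟩ := (isCompact_Icc (a := a) (b := b)).exists_bound_of_continuousOn hf.continuousOn
  exact MemLp.of_bound hf.aestronglyMeasurable C
    (ae_restrict_of_forall_mem measurableSet_Ioc fun x hx => hC x (Ioc_subset_Icc_self hx))

theorem integral_le_exp_weighted_holder {φ g : ℝ → ℝ} {p q t : ℝ} (hpq : p.HolderConjugate q)
    (hφ : Continuous φ) (hg : Continuous g) (hg_nonneg : ∀ x, 0 ≤ g x) (ht : 0 ≤ t) :
    ∫ τ in (0:ℝ)..t, g τ ≤ (∫ τ in (0:ℝ)..t, exp (φ τ) * g τ ^ p) ^ (1 / p) *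
      (∫ τ in (0:ℝ)..t, exp (-(q / p * φ τ))) ^ (1 / q) := by
  have hp0 := hpq.pos.ne'
  have hsplit : ∀ τ, exp (φ τ / p) * g τ * exp (-(φ τ / p)) = g τ := fun τ => by
    rw [mul_right_comm, ← exp_add, add_neg_cancel, exp_zero, one_mul]
  have hpow_left : ∀ τ, (exp (φ τ / p) * g τ) ^ p = exp (φ τ) * g τ ^ p := fun τ => by
    rw [mul_rpow (exp_pos _).le (hg_nonneg τ), ← exp_mul, div_mul_cancel₀ _ hp0]
  have hpow_right : ∀ τ, exp (-(φ τ / p)) ^ q = exp (-(q / p * φ τ)) := fun τ => by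
    rw [← exp_mul]; ring_nf
  simp only [integral_of_le ht]
  have := integral_mul_le_Lp_mul_Lq_of_nonneg (μ := volume.restrict (Ioc 0 t)) hpq
    (Filter.Eventually.of_forall fun τ => mul_nonneg (exp_pos _).le (hg_nonneg τ))
    (Filter.Eventually.of_forall fun τ => (exp_pos _).le)
    ((show Continuous fun τ => exp (φ τ / p) * g τ by fun_prop).memLp_restrict_Ioc 0 t _)
    ((show Continuous fun τ => exp (-(φ τ / p)) by fun_prop).memLp_restrict_Ioc 0 t _)
  simpa only [hsplit, hpow_left, hpow_right] using this

theorem integral_exp_neg_mul_rpow_le {b p t : ℝ} (hb : 0 < b) (hp : 0 < p) (ht : 0 ≤ t) :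
    ∫ τ in (0:ℝ)..t, exp (-b * τ ^ p) ≤ b ^ (-1 / p) * Gamma (1 / p + 1) := by
  have hint : IntegrableOn (fun τ : ℝ => exp (-b * τ ^ p)) (Ioi 0) := by
    simpa only [rpow_zero, one_mul] using
      integrableOn_rpow_mul_exp_neg_mul_rpow neg_one_lt_zero hp hb
  rw [integral_of_le ht, ← integral_exp_neg_mul_rpow hp hb]
  exact setIntegral_mono_set hint (Filter.Eventually.of_forall fun _ => (exp_pos _).le)
    Ioc_subset_Ioi_self.eventuallyLE

theorem one_add_rpow_le_two_mul_one_add_rpow {t μ : ℝ} (ht : 0 ≤ t) (hμ : 0 ≤ μ) :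
    1 + t ^ μ ≤ 2 * (1 + t) ^ μ := by
  have h1 : 1 ≤ (1 + t) ^ μ := one_le_rpow (by linarith) hμ
  have h2 : t ^ μ ≤ (1 + t) ^ μ := rpow_le_rpow ht (by linarith) hμ
  linarith

theorem le_mul_rpow_of_rpow_le_mul_rpow {x y M a σ : ℝ} (hx : 0 ≤ x) (hy : 0 ≤ y) (hM : 0 ≤ M)
    (hσ : 0 < σ) (h : x ^ σ ≤ M * y ^ a) : x ≤ M ^ σ⁻¹ * y ^ (a / σ) := calc
  x = (x ^ σ) ^ σ⁻¹ := (rpow_rpow_inv hx hσ.ne').symm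
  _ ≤ (M * y ^ a) ^ σ⁻¹ := rpow_le_rpow (rpow_nonneg hx σ) h (inv_nonneg.mpr hσ.le)
  _ = M ^ σ⁻¹ * y ^ (a / σ) := by
    rw [mul_rpow hM (rpow_nonneg hy a), ← rpow_mul hy, div_eq_mul_inv]

theorem exists_integral_le_of_weighted_integral_le {g : ℝ → ℝ} {q c μ B : ℝ} (hq : 1 < q)
    (hc : 0 < c) (hμ : 0 < μ) (hB : 0 < B) (hg_cont : Continuous g) (hg_nonneg : ∀ t, 0 ≤ g t)
    (hg_int : ∀ t ≥ (0:ℝ),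
      (∫ τ in (0:ℝ)..t, exp (c * τ ^ μ) * g τ ^ q) ≤ B * (1 + t ^ μ)) :
    ∃ A > 0, ∀ t ≥ (0:ℝ), ∫ τ in (0:ℝ)..t, g τ ≤ A * (1 + t) ^ (μ / q) := by
  have hpq := Real.HolderConjugate.conjExponent hq
  set q' := q.conjExponent
  set K := (q' / q * c) ^ (-1 / μ) * Gamma (1 / μ + 1)
  have hb : 0 < q' / q * c := by have := hpq.pos; have := hpq.symm.pos; positivity
  have hK : 0 < K := mul_pos (rpow_pos_of_pos hb _) (Gamma_pos_of_pos (by positivity))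
  refine ⟨(2 * B) ^ (1 / q) * K ^ (1 / q'), by positivity, fun t ht => ?_⟩
  have hweight_nonneg : 0 ≤ ∫ τ in (0:ℝ)..t, exp (c * τ ^ μ) * g τ ^ q :=
    intervalIntegral.integral_nonneg ht fun τ _ =>
      mul_nonneg (exp_pos _).le (rpow_nonneg (hg_nonneg τ) q)
  have hweight : ∫ τ in (0:ℝ)..t, exp (c * τ ^ μ) * g τ ^ q ≤ 2 * B * (1 + t) ^ μ := calc
    _ ≤ B * (1 + t ^ μ) := hg_int t ht
    _ ≤ B * (2 * (1 + t) ^ μ) := by gcongr; exact one_add_rpow_le_two_mul_one_add_rpow ht hμ.le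
    _ = 2 * B * (1 + t) ^ μ := by ring
  have hdecay_nonneg : 0 ≤ ∫ τ in (0:ℝ)..t, exp (-(q' / q * (c * τ ^ μ))) :=
    intervalIntegral.integral_nonneg ht fun τ _ => (exp_pos _).le
  have hdecay : ∫ τ in (0:ℝ)..t, exp (-(q' / q * (c * τ ^ μ))) ≤ K := by
    simpa only [neg_mul, mul_assoc] using integral_exp_neg_mul_rpow_le hb hμ ht
  calc ∫ τ in (0:ℝ)..t, g τ
      ≤ (∫ τ in (0:ℝ)..t, exp (c * τ ^ μ) * g τ ^ q) ^ (1 / q) *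
          (∫ τ in (0:ℝ)..t, exp (-(q' / q * (c * τ ^ μ)))) ^ (1 / q') :=
        integral_le_exp_weighted_holder hpq (continuous_const.mul (continuous_rpow_const hμ.le))
          hg_cont hg_nonneg ht
    _ ≤ (2 * B * (1 + t) ^ μ) ^ (1 / q) * K ^ (1 / q') := by
        have := hpq.pos; have := hpq.symm.pos
        gcongr
    _ = (2 * B) ^ (1 / q) * K ^ (1 / q') * (1 + t) ^ (μ / q) := by
        rw [mul_rpow (by positivity) (by positivity), ← rpow_mul (by linarith), mul_one_div]
        ring

theorem stmt_12_general (σ q c μ C B : ℝ) (hσ0 : 0 < σ) (hq : 1 < q)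
    (hc : 0 < c) (hμ0 : 0 < μ) (hC : 0 < C) (hB : 0 < B)
    (D g : ℝ → ℝ) (hD_pos : ∀ t, 0 < D t) (hD_diff : Differentiable ℝ D)
    (hg_cont : Continuous g) (hg_nonneg : ∀ t, 0 ≤ g t)
    (hD' : ∀ t ≥ (0:ℝ), deriv D t ≤ C * g t * D t ^ (1 - σ))
    (hg_int : ∀ t ≥ (0:ℝ),
      (∫ τ in (0:ℝ)..t, Real.exp (c * τ ^ μ) * g τ ^ q) ≤ B * (1 + t ^ μ)) :
    ∃ C' > 0, ∀ t ≥ (0:ℝ), D t ≤ C' * (1 + t) ^ (μ / (q * σ)) := by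
  obtain ⟨A, hA, hgA⟩ :=
    exists_integral_le_of_weighted_integral_le hq hc hμ0 hB hg_cont hg_nonneg hg_int
  set M := D 0 ^ σ + σ * C * A
  have hM : 0 < M := by have := hD_pos 0; positivity
  refine ⟨M ^ σ⁻¹, by positivity, fun t ht => ?_⟩
  have hgrowth : 1 ≤ (1 + t) ^ (μ / q) := one_le_rpow (by linarith) (by positivity)
  have hDσ : D t ^ σ ≤ M * (1 + t) ^ (μ / q) := calc
    D t ^ σ ≤ D 0 ^ σ + σ * ∫ τ in (0:ℝ)..t, C * g τ :=
      rpow_le_rpow_add_integral_of_deriv_le hσ0.le hD_pos hD_diff (by fun_prop) hD' ht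
    _ = D 0 ^ σ + σ * C * ∫ τ in (0:ℝ)..t, g τ := by
      rw [intervalIntegral.integral_const_mul, mul_assoc]
    _ ≤ D 0 ^ σ + σ * C * (A * (1 + t) ^ (μ / q)) := by gcongr; exact hgA t ht
    _ ≤ M * (1 + t) ^ (μ / q) := by
      have := hD_pos 0
      nlinarith [rpow_pos_of_pos this σ]
  simpa only [div_div] using
    le_mul_rpow_of_rpow_le_mul_rpow (hD_pos t).le (by linarith) hM.le hσ0 hDσ

/-- Improved dispersion via exponentially weighted enstrophy
(second step of Appendix C). -/
theorem stmt_12 (σ q c μ C B : ℝ) (hσ0 : 0 < σ) (hσ1 : σ ≤ 1) (hq : 1 < q)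
    (hc : 0 < c) (hμ0 : 0 < μ) (hμ1 : μ ≤ 1) (hC : 0 < C) (hB : 0 < B)
    (D g : ℝ → ℝ) (hD_pos : ∀ t, 0 < D t) (hD_diff : Differentiable ℝ D)
    (hg_cont : Continuous g) (hg_nonneg : ∀ t, 0 ≤ g t)
    (hD' : ∀ t ≥ (0:ℝ), deriv D t ≤ C * g t * D t ^ (1 - σ))
    (hg_int : ∀ t ≥ (0:ℝ),
      (∫ τ in (0:ℝ)..t, Real.exp (c * τ ^ μ) * g τ ^ q) ≤ B * (1 + t ^ μ)) :
    ∃ C' > 0, ∀ t ≥ (0:ℝ), D t ≤ C' * (1 + t) ^ (μ / (q * σ)) :=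
  stmt_12_general σ q c μ C B hσ0 hq hc hμ0 hC hB D g hD_pos hD_diff hg_cont hg_nonneg hD' hg_int
end
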